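/- arXiv:1806.03437 — 2 statements merged into one kernel-verified Lean document; each statement's English description precedes it below -/
import Mathlib

section
/- Fix N ∈ ℕ, 0 ≤ ℓ ≤ N, and natural numbers n_1,...,n_N. Suppose that in the case N even with ℓ = N/2 the multisets {n_1,...,n_ℓ} and {n_{ℓ+1},...,n_N} are different; in all other cases (N odd, or N even with ℓ ≠ N/2) no extra assumption is made. For k ≥ 1 define a_k := ∑_{j=1}^ℓ ⟨n_j⟩^{-(2k+1)} − ∑_{j=ℓ+1}^N ⟨n_j⟩^{-(2k+1)}, where ⟨n⟩ = √(1+n²). Then there exists k with 1 ≤ k ≤ N such that a_k ≠ 0. -/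
/-!
Writing `x m = ⟨m⟩⁻²`, one has `⟨m⟩^{-(2k+3)} = ⟨m⟩⁻³ · x m ^ k`, so `a_{k+1}` is a combination of
the powers `x m ^ k` over the at most `N` distinct values `m` occurring among the `n_j`, weighted by
`⟨m⟩⁻³` times the difference of the multiplicities of `m` in the two multisets. Since `m ↦ x m` is
injective on `ℕ`, the vanishing of `a_1, …, a_N` makes these weights vanish by invertibility of the
Vandermonde matrix, so the two multisets coincide. Comparing cardinalities then gives `2ℓ = N`.
-/

/-- Japanese bracket `⟨x⟩ = √(1+x²)`. -/
noncomputable def jap (x : ℝ) : ℝ := Real.sqrt (1 + x ^ 2)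

open Finset

theorem Finset.eq_zero_of_forall_sum_mul_pow_eq_zero {ι R : Type*} [CommRing R] [IsDomain R]
    {s : Finset ι} {x w : ι → R} (hx : Set.InjOn x s)
    (h : ∀ k < #s, ∑ i ∈ s, w i * x i ^ k = 0) : ∀ i ∈ s, w i = 0 := by
  let e := s.equivFin.symm
  have hinj : Function.Injective fun j => x (e j) := fun a b hab =>
    e.injective (Subtype.ext (hx (e a).2 (e b).2 hab))
  have hw : (fun j => w (e j)) = 0 :=
    Matrix.eq_zero_of_forall_pow_sum_mul_pow_eq_zero hinj fun k => by
      rw [← h k k.isLt, ← s.sum_coe_sort]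
      exact e.sum_comp fun i => w i * x i ^ (k : ℕ)
  intro i hi
  simpa [e] using congrFun hw (e.symm ⟨i, hi⟩)

theorem Multiset.sum_map_eq_sum_count_nsmul_of_subset {α M : Type*} [DecidableEq α]
    [AddCommMonoid M] (S : Multiset α) {V : Finset α} (hS : S.toFinset ⊆ V) (f : α → M) :
    (S.map f).sum = ∑ a ∈ V, S.count a • f a := by
  rw [Finset.sum_multiset_map_count]
  exact sum_subset hS fun a _ ha => by
    rw [Multiset.count_eq_zero.mpr (by simpa using ha), zero_smul]

theorem Multiset.eq_of_forall_sum_map_mul_pow_eq {α R : Type*} [CommRing R] [IsDomain R]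
    [CharZero R] {S T : Multiset α} {x u : α → R} (hx : Function.Injective x)
    (hu : ∀ a, u a ≠ 0)
    (h : ∀ k < card (S + T),
      (S.map fun a => u a * x a ^ k).sum = (T.map fun a => u a * x a ^ k).sum) :
    S = T := by
  classical
  set V := (S + T).toFinset
  have hweights : ∀ a ∈ V, ((S.count a : R) - T.count a) * u a = 0 := by
    refine Finset.eq_zero_of_forall_sum_mul_pow_eq_zero hx.injOn fun k hk => ?_
    have hk := h k (hk.trans_le (Multiset.toFinset_card_le _))
    rw [sum_map_eq_sum_count_nsmul_of_subset S (V := V) (by simp [V]),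
      sum_map_eq_sum_count_nsmul_of_subset T (V := V) (by simp [V]),
      ← sub_eq_zero, ← Finset.sum_sub_distrib] at hk
    rw [← hk]
    refine sum_congr rfl fun a _ => ?_
    simp only [nsmul_eq_mul]
    ring
  ext a
  by_cases ha : a ∈ V
  · simpa [hu a, sub_eq_zero] using hweights a ha
  · simp only [V, Multiset.mem_toFinset, Multiset.mem_add, not_or] at ha
    rw [Multiset.count_eq_zero.mpr ha.1, Multiset.count_eq_zero.mpr ha.2]

theorem jap_sq (x : ℝ) : jap x ^ 2 = 1 + x ^ 2 := Real.sq_sqrt (by positivity)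

theorem jap_ne_zero (x : ℝ) : jap x ≠ 0 := (Real.sqrt_pos.mpr (by positivity)).ne'

theorem one_div_jap_pow_two_mul_add_three (x : ℝ) (k : ℕ) :
    1 / jap x ^ (2 * (k + 1) + 1) = (jap x ^ 3)⁻¹ * ((1 + x ^ 2)⁻¹) ^ k := by
  rw [show 2 * (k + 1) + 1 = 3 + 2 * k by ring, pow_add, pow_mul, jap_sq, one_div, mul_inv, inv_pow]

theorem inv_one_add_sq_natCast_injective :
    Function.Injective fun m : ℕ => (1 + (m : ℝ) ^ 2)⁻¹ := fun a b h => by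
  simpa using h

/-- Fix `N`, `0 ≤ ℓ ≤ N` and naturals `n_1, …, n_N`; assume that in the case `2ℓ = N`
the multisets `{n_1,…,n_ℓ}` and `{n_{ℓ+1},…,n_N}` are different.  Then for
`a_k := ∑_{j=1}^ℓ ⟨n_j⟩^{-(2k+1)} − ∑_{j=ℓ+1}^N ⟨n_j⟩^{-(2k+1)}` there exists
`1 ≤ k ≤ N` with `a_k ≠ 0`. -/
theorem exists_nonzero_coefficient (N ℓ : ℕ) (hℓ : ℓ ≤ N) (n : ℕ → ℕ)
    (hmult : 2 * ℓ = N →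
      Multiset.map n (Finset.Icc 1 ℓ).val ≠ Multiset.map n (Finset.Icc (ℓ + 1) N).val) :
    ∃ k : ℕ, 1 ≤ k ∧ k ≤ N ∧
      (∑ j ∈ Finset.Icc 1 ℓ, 1 / jap (n j) ^ (2 * k + 1))
        - ∑ j ∈ Finset.Icc (ℓ + 1) N, 1 / jap (n j) ^ (2 * k + 1) ≠ 0 := by
  by_contra! hvanish
  have hcard : Multiset.card (Multiset.map n (Icc 1 ℓ).val + Multiset.map n (Icc (ℓ + 1) N).val)
      = N := by
    simp only [Multiset.card_add, Multiset.card_map, card_val, Nat.card_Icc]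
    omega
  have hsame : Multiset.map n (Icc 1 ℓ).val = Multiset.map n (Icc (ℓ + 1) N).val := by
    refine Multiset.eq_of_forall_sum_map_mul_pow_eq inv_one_add_sq_natCast_injective
      (u := fun m : ℕ => (jap m ^ 3)⁻¹) (fun m => inv_ne_zero (pow_ne_zero _ (jap_ne_zero _)))
      fun k hk => ?_
    have hk := hvanish (k + 1) (by omega) (by omega)
    simp only [one_div_jap_pow_two_mul_add_three, sub_eq_zero, sum_eq_multiset_sum] at hk
    simpa only [Multiset.map_map, Function.comp_def] using hk
  refine hmult ?_ hsame
  have := congrArg Multiset.card hsame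
  simp only [Multiset.card_map, card_val, Nat.card_Icc] at this
  omega
end

section
/- Let ℓ ∈ ℕ* and let ã be a symmetric p-linear map (p = 2ℓ) producing x-independent symbols ã(U₁,...,U_p; ξ) ∈ ℂ, satisfying: (reality/reversibility) ã(Π⁻_{n_1}U,...,Π⁻_{n_ℓ}U, Π⁺_{n_1}U,...,Π⁺_{n_ℓ}U; ξ) = conj( ã(Π⁺_{n_1}U,...,Π⁺_{n_ℓ}U, Π⁻_{n_1}U,...,Π⁻_{n_ℓ}U; −ξ) ), and (parity) ã(U,...,U; ξ) = ã(U,...,U; −ξ). Then for any n_1,...,n_ℓ ∈ ℕ and any ξ, the number ã(Π⁺_{n_1}U,...,Π⁺_{n_ℓ}U, Π⁻_{n_1}U,...,Π⁻_{n_ℓ}U; ξ) is real. -/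
/-!
Swapping the two halves of the arguments is a permutation, so by symmetry
`ã(Π⁻U, Π⁺U; ξ) = ã(Π⁺U, Π⁻U; ξ)`, and by reversibility this is `conj ã(Π⁺U, Π⁻U; -ξ)`.
Parity on the diagonal extends to all arguments by polarization: for a symmetric `m`-linear `f`,
`∑_t (-1)^|t| f(w_t, …, w_t) = m! f(v₁, …, v_m)` with `w_t = ∑_{k ∉ t} v_k`, because after
expanding, inclusion–exclusion keeps only the terms `f(v ∘ r)` with `r` surjective, i.e. a
permutation. Hence `ξ ↦ ã(Π⁺U, Π⁻U; ξ)` is even, and its value at `ξ` is its own conjugate.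
-/

open MeasureTheory

instance : Fact (0 < 2 * Real.pi) := ⟨by positivity⟩

/-- The basis function `φ_n(x) = cos(nx)/√π` of even `L²` functions on `𝕋`. -/
noncomputable def phiN (n : ℕ) : AddCircle (2 * Real.pi) → ℂ :=
  fun x => (fourier (n : ℤ) x + fourier (-(n : ℤ)) x) / (2 * Real.sqrt Real.pi)

/-- The coefficient `û(n) = ∫_𝕋 u φ_n`. -/
noncomputable def uhat (u : AddCircle (2 * Real.pi) → ℂ) (n : ℕ) : ℂ :=
  ∫ x, u x * phiN n x

/-- The signed projector `Π⁺_n U = û(n) e₊ φ_n` for `U = (u, ū)`. -/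
noncomputable def Pp (n : ℕ) (U : AddCircle (2 * Real.pi) → ℂ × ℂ) :
    AddCircle (2 * Real.pi) → ℂ × ℂ :=
  fun x => (uhat (fun y => (U y).1) n * phiN n x, 0)

/-- The signed projector `Π⁻_n U = conj(û(n)) e₋ φ_n` for `U = (u, ū)`. -/
noncomputable def Pm (n : ℕ) (U : AddCircle (2 * Real.pi) → ℂ × ℂ) :
    AddCircle (2 * Real.pi) → ℂ × ℂ :=
  fun x => (0, (starRingEnd ℂ) (uhat (fun y => (U y).1) n) * phiN n x)

open Finset Fintype
open scoped Nat

/-- Inclusion–exclusion over the values missed by `r`. -/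
theorem Finset.sum_filter_surjective {ι κ G : Type*} [Fintype ι] [DecidableEq ι] [Fintype κ]
    [DecidableEq κ] [AddCommGroup G] (g : (ι → κ) → G) :
    ∑ r with Function.Surjective r, g r
      = ∑ t : Finset κ, (-1 : ℤ) ^ #t • ∑ r ∈ piFinset fun _ => tᶜ, g r := by
  have h_inf_compl : (univ.inf fun k => ({r | ∀ i, r i ≠ k} : Finset (ι → κ))ᶜ)
      = ({r | Function.Surjective r} : Finset (ι → κ)) := by
    ext r
    rw [mem_filter]
    simp [Finset.mem_inf, Function.Surjective]
  have h_inf (t : Finset κ) : t.inf (fun k => ({r | ∀ i, r i ≠ k} : Finset (ι → κ)))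
      = piFinset fun _ => tᶜ := by
    ext r
    simp only [Finset.mem_inf, mem_filter, mem_piFinset, mem_compl, mem_univ, true_and]
    exact ⟨fun h i hi => h _ hi i rfl, fun h k hk i hi => h i (hi ▸ hk)⟩
  rw [← h_inf_compl, inclusion_exclusion_sum_inf_compl, powerset_univ]
  simp_rw [h_inf]

namespace MultilinearMap

variable {R M N ι : Type*} [CommSemiring R] [AddCommMonoid M] [Module R M] [AddCommGroup N]
  [Module R N] [Fintype ι] [DecidableEq ι]

theorem sum_neg_one_pow_smul_map_diag {κ : Type*} [Fintype κ] [DecidableEq κ]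
    (f : MultilinearMap R (fun _ : ι => M) N) (v : κ → M) :
    ∑ t : Finset κ, (-1 : ℤ) ^ #t • f (fun _ => ∑ k ∈ tᶜ, v k)
      = ∑ r with Function.Surjective r, f (v ∘ r) := by
  simp_rw [f.map_sum_finset, Finset.sum_filter_surjective]
  rfl

theorem sum_filter_surjective_map_comp_of_symm (f : MultilinearMap R (fun _ : ι => M) N)
    (hf : ∀ (σ : Equiv.Perm ι) (v : ι → M), f (v ∘ σ) = f v) (v : ι → M) :
    ∑ r : ι → ι with Function.Surjective r, f (v ∘ r) = (card ι)! • f v := by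
  calc ∑ r : ι → ι with Function.Surjective r, f (v ∘ r)
      = ∑ σ : Equiv.Perm ι, f (v ∘ σ) := by
        refine (sum_bij (fun (σ : Equiv.Perm ι) _ => ⇑σ) (fun σ _ => ?_)
          (fun _ _ _ _ h => Equiv.coe_fn_injective h) (fun r hr => ?_) (fun _ _ => rfl)).symm
        · simpa using σ.surjective
        · have hr : Function.Surjective r := (mem_filter.1 hr).2
          exact ⟨Equiv.ofBijective r (Finite.surjective_iff_bijective.1 hr), mem_univ _, rfl⟩
    _ = (card ι)! • f v := by simp [hf, Fintype.card_perm]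

theorem eq_of_symm_of_map_diag_eq [NoZeroSMulDivisors ℕ N]
    {f g : MultilinearMap R (fun _ : ι => M) N}
    (hf : ∀ (σ : Equiv.Perm ι) (v : ι → M), f (v ∘ σ) = f v)
    (hg : ∀ (σ : Equiv.Perm ι) (v : ι → M), g (v ∘ σ) = g v)
    (hdiag : ∀ w : M, f (fun _ => w) = g (fun _ => w)) : f = g := by
  rw [← sub_eq_zero]
  ext v
  have h_symm (σ : Equiv.Perm ι) (w : ι → M) : (f - g) (w ∘ σ) = (f - g) w := by
    simp only [sub_apply, hf, hg]
  have h_factorial : (card ι)! • (f - g) v = 0 := by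
    rw [← sum_filter_surjective_map_comp_of_symm _ h_symm, ← sum_neg_one_pow_smul_map_diag]
    simp [hdiag]
  exact (smul_eq_zero.1 h_factorial).resolve_left (Nat.factorial_ne_zero _)

end MultilinearMap

def halfAppend {α : Type*} {ℓ : ℕ} (a b : Fin ℓ → α) : Fin (2 * ℓ) → α :=
  fun j => if h : (j : ℕ) < ℓ then a ⟨j, h⟩ else b ⟨j - ℓ, by omega⟩

def halfSwap (ℓ : ℕ) : Equiv.Perm (Fin (2 * ℓ)) :=
  Function.Involutive.toPerm
    (fun j => ⟨if (j : ℕ) < ℓ then j + ℓ else j - ℓ, by split_ifs <;> omega⟩)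
    (fun j => by ext; dsimp only; split_ifs <;> omega)

theorem halfSwap_val {ℓ : ℕ} (j : Fin (2 * ℓ)) :
    (halfSwap ℓ j : ℕ) = if (j : ℕ) < ℓ then j + ℓ else j - ℓ := rfl

theorem halfAppend_comp_halfSwap {α : Type*} {ℓ : ℕ} (a b : Fin ℓ → α) :
    halfAppend a b ∘ halfSwap ℓ = halfAppend b a := by
  funext j
  by_cases hj : (j : ℕ) < ℓ
  · simp [halfAppend, halfSwap_val, hj]
  · have hj' : (j : ℕ) - ℓ < ℓ := by omega
    simp [halfAppend, halfSwap_val, hj, hj']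

/-- Key cancellation: let `ã` be a symmetric `2ℓ`-linear map with values in
`x`-independent symbols `ξ ↦ ã(U₁,…,U_{2ℓ}; ξ) ∈ ℂ`, satisfying the
reality/reversibility condition
`ã(Π⁻_{n⃗}U, Π⁺_{n⃗}U; ξ) = conj(ã(Π⁺_{n⃗}U, Π⁻_{n⃗}U; −ξ))` and the parity
condition `ã(V,…,V; ξ) = ã(V,…,V; −ξ)`.  Then the resonant symbol
`ã(Π⁺_{n_1}U,…,Π⁺_{n_ℓ}U, Π⁻_{n_1}U,…,Π⁻_{n_ℓ}U; ξ)` is real. -/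
theorem resonant_symbol_real (ℓ : ℕ)
    (A : MultilinearMap ℂ
      (fun _ : Fin (2 * ℓ) => (AddCircle (2 * Real.pi) → ℂ × ℂ)) (ℝ → ℂ))
    (hsym : ∀ (σ : Equiv.Perm (Fin (2 * ℓ)))
      (v : Fin (2 * ℓ) → AddCircle (2 * Real.pi) → ℂ × ℂ), A (v ∘ σ) = A v)
    (U : AddCircle (2 * Real.pi) → ℂ × ℂ)
    (hrev : ∀ (n : Fin ℓ → ℕ) (ξ : ℝ),
      A (fun j : Fin (2 * ℓ) =>
          if h : (j : ℕ) < ℓ then Pm (n ⟨(j : ℕ), h⟩) U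
          else Pp (n ⟨(j : ℕ) - ℓ, by have := j.isLt; omega⟩) U) ξ
        = (starRingEnd ℂ)
            (A (fun j : Fin (2 * ℓ) =>
                if h : (j : ℕ) < ℓ then Pp (n ⟨(j : ℕ), h⟩) U
                else Pm (n ⟨(j : ℕ) - ℓ, by have := j.isLt; omega⟩) U) (-ξ)))
    (hpar : ∀ (V : AddCircle (2 * Real.pi) → ℂ × ℂ) (ξ : ℝ),
      A (fun _ => V) ξ = A (fun _ => V) (-ξ)) :
    ∀ (n : Fin ℓ → ℕ) (ξ : ℝ),
      (A (fun j : Fin (2 * ℓ) =>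
          if h : (j : ℕ) < ℓ then Pp (n ⟨(j : ℕ), h⟩) U
          else Pm (n ⟨(j : ℕ) - ℓ, by have := j.isLt; omega⟩) U) ξ).im = 0 := by
  intro n ξ
  set vP := halfAppend (fun k => Pp (n k) U) (fun k => Pm (n k) U)
  set vM := halfAppend (fun k => Pm (n k) U) (fun k => Pp (n k) U)
  have h_even : A vP ξ = A vP (-ξ) := by
    have h_eq := MultilinearMap.eq_of_symm_of_map_diag_eq (f := A)
      (g := (LinearMap.funLeft ℂ ℂ Neg.neg).compMultilinearMap A) hsym
      (fun σ v => by simp only [LinearMap.compMultilinearMap_apply, hsym])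
      (fun V => funext fun ξ => hpar V ξ)
    exact congrFun (DFunLike.congr_fun h_eq vP) ξ
  have h_swap : A vM = A vP :=
    (congrArg A (halfAppend_comp_halfSwap _ _)).symm.trans (hsym _ _)
  have h_conj : A vM ξ = starRingEnd ℂ (A vP (-ξ)) := hrev n ξ
  rw [h_swap, ← h_even] at h_conj
  exact Complex.conj_eq_iff_im.1 h_conj.symm
end
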